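/- Let α ≥ 2 be an integer and let I₁, …, I_α : [0,1] → ℝ² be Lipschitz arcs with I_j(0) = I_j(1) = 0 for every j, such that there is μ > 0 with ∫_0^1 |I_j(t) − I_k(t)| dt = μ for all j ≠ k. For an integer β with 2 ≤ β < α, let Ω*_β be the set of curves γ: ℝ → ℝ² such that there is a sequence (j_i)_{i∈ℤ} in {1,…,β} with γ(i+s) = I_{j_i}(s) for all i ∈ ℤ and s ∈ [0,1]. Then Ω*_β is invariant under the time-one shift F₁, and the topological entropy of F₁ restricted to (Ω*_β, ρ) equals log β. -/

import Mathlib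

open Filter

/-- The metric `ρ` on the space of curves `ℝ → M`. -/
noncomputable def rho {M : Type*} [PseudoMetricSpace M] (γ₁ γ₂ : ℝ → M) : ℝ :=
  ∑' i : ℤ, (2 : ℝ) ^ (-|i|) * ∫ t in (i : ℝ)..((i : ℝ) + 1), dist (γ₁ t) (γ₂ t)

/-- The time-one shift on curves: `F₁(γ)(t) = γ(t + 1)`. -/
def timeOneShift {M : Type*} (γ : ℝ → M) : ℝ → M := fun t => γ (t + 1)

/-- A curve `γ : ℝ → M` is `L`-Lipschitz. -/
def LipschitzCurve {M : Type*} [PseudoMetricSpace M] (L : ℝ) (γ : ℝ → M) : Prop :=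
  ∀ s t : ℝ, dist (γ s) (γ t) ≤ L * |s - t|

/-- `E` is an `(n, ε)`-dense subset of `F` for the map `f` and the distance `d`:
`E ⊆ F` and the dynamical balls `{y | d_n^f(x,y) < ε}`, `x ∈ E`, cover `F`. -/
def IsDynCover {X : Type*} (d : X → X → ℝ) (f : X → X) (F : Set X) (ε : ℝ) (n : ℕ)
    (E : Finset X) : Prop :=
  ↑E ⊆ F ∧ ∀ y ∈ F, ∃ x ∈ E, ∀ i < n, d (f^[i] x) (f^[i] y) < ε

/-- `S_d(f, ε, n)`: the minimal cardinality of an `(n, ε)`-dense subset of `F`. -/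
noncomputable def coverCard {X : Type*} (d : X → X → ℝ) (f : X → X) (F : Set X) (ε : ℝ)
    (n : ℕ) : ℕ∞ :=
  ⨅ (E : Finset X) (_ : IsDynCover d f F ε n E), (E.card : ℕ∞)

/-- The topological entropy of `f` on `F`, w.r.t. the distance `d`:
`h(f) = lim_{ε → 0⁺} limsup_{n → ∞} (1/n) log S_d(f, ε, n)`; since the inner rate is
antitone in `ε`, the limit is realized as the supremum over `ε > 0`. -/
noncomputable def topEntropy {X : Type*} (d : X → X → ℝ) (f : X → X) (F : Set X) : EReal :=
  ⨆ (ε : ℝ) (_ : (0 : ℝ) < ε),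
    atTop.limsup fun n : ℕ => ENNReal.log (coverCard d f F ε n) / (n : EReal)

/-- The plane `ℝ²` with the Euclidean distance. -/
abbrev Plane := EuclideanSpace ℝ (Fin 2)

/-- The set `Ω*` of curves obtained by concatenating the arcs `I j`, `j ∈ {1,…,α}`:
`γ ∈ Ω*` iff there is a sequence `(j_i)_{i ∈ ℤ}` with `γ(i + s) = I_{j_i}(s)` for all
`i ∈ ℤ` and `s ∈ [0,1]`. -/
def arcConcatenations {α : ℕ} (I : Fin α → ℝ → Plane) : Set (ℝ → Plane) :=
  {γ | ∃ js : ℤ → Fin α, ∀ i : ℤ, ∀ s ∈ Set.Icc (0 : ℝ) 1, γ ((i : ℝ) + s) = I (js i) s}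

/-- The set `Ω*_β` of curves obtained by concatenating only the first `β` arcs among
`I j`, `j ∈ {1,…,α}`. -/
def arcConcatenationsRestricted {α : ℕ} (I : Fin α → ℝ → Plane) (β : ℕ) : Set (ℝ → Plane) :=
  {γ | ∃ js : ℤ → Fin α, (∀ i, (js i : ℕ) < β) ∧
    ∀ i : ℤ, ∀ s ∈ Set.Icc (0 : ℝ) 1, γ ((i : ℝ) + s) = I (js i) s}

/-!
A curve of `Ω*_β` is determined by its code in `(Fin β)^ℤ`, and `F₁` acts on codes as the
full shift. Since the weights `2^{-|i|}` are summable, two curves whose codes agree on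
`[-m, m]` are `ε`-close for `m` large, so the first `n` iterates at scale `ε` only see a
window of `n + 2m + 1` symbols and `β^{n + 2m + 1}` dynamical balls suffice. Conversely,
curves whose codes differ at some `k < n` have `k`-th shifts at `ρ`-distance at least `μ`
(the first summand of `ρ` already contributes `μ`), so no `μ/2`-ball contains both and every
cover has at least `β^n` elements. Hence `(1/n) log S(ε, n) → log β`.
-/

open Set MeasureTheory
open scoped ENNReal Topology

section GrowthRate

lemma ENNReal.log_natCast_pow {b : ℕ} (hb : b ≠ 0) (n : ℕ) :
    ENNReal.log ((b : ℝ≥0∞) ^ n) = ((n * Real.log b : ℝ) : EReal) := by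
  have hb' : (0 : ℝ) < b := by positivity
  rw [ENNReal.log_pow, ← ENNReal.ofReal_natCast, ENNReal.log_ofReal_of_pos hb', EReal.coe_mul]
  rfl

lemma limsup_log_div_le_of_le_pow {u : ℕ → ℕ∞} {b : ℕ} (hb : b ≠ 0) (k : ℕ)
    (hu : ∀ n, u n ≤ (b : ℕ∞) ^ (n + k)) :
    atTop.limsup (fun n : ℕ => ENNReal.log (u n) / (n : EReal)) ≤ Real.log b := by
  have hle : ∀ n : ℕ,
      ENNReal.log (u n) / (n : EReal) ≤ (((n + k) * Real.log b / n : ℝ) : EReal) := by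
    intro n
    have hlog : ENNReal.log (u n) ≤ (((n + k : ℕ) * Real.log b : ℝ) : EReal) := by
      rw [← ENNReal.log_natCast_pow hb]
      exact ENNReal.log_monotone (by exact_mod_cast hu n)
    calc ENNReal.log (u n) / (n : EReal)
        ≤ (((n + k : ℕ) * Real.log b : ℝ) : EReal) / ((n : ℝ) : EReal) :=
          EReal.div_le_div_right_of_nonneg (by positivity) hlog
      _ = _ := by rw [← EReal.coe_div]; push_cast; rfl
  have hlim : Tendsto (fun n : ℕ => (n + k) * Real.log b / n) atTop (𝓝 (Real.log b)) := by
    have hk := (tendsto_const_div_atTop_nhds_zero_nat (k * Real.log b)).const_add (Real.log b)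
    rw [add_zero] at hk
    refine hk.congr' ?_
    filter_upwards [eventually_ne_atTop 0] with n hn
    field_simp
  calc atTop.limsup (fun n : ℕ => ENNReal.log (u n) / (n : EReal))
      ≤ atTop.limsup (fun n : ℕ => (((n + k) * Real.log b / n : ℝ) : EReal)) :=
        limsup_le_limsup (Eventually.of_forall hle)
    _ = Real.log b := (EReal.tendsto_coe.mpr hlim).limsup_eq

lemma le_limsup_log_div_of_pow_le {u : ℕ → ℕ∞} {b : ℕ} (hb : b ≠ 0)
    (hu : ∀ n, (b : ℕ∞) ^ n ≤ u n) :
    Real.log b ≤ atTop.limsup (fun n : ℕ => ENNReal.log (u n) / (n : EReal)) := by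
  refine le_limsup_of_frequently_le (frequently_atTop.mpr fun N => ⟨N + 1, by omega, ?_⟩)
    (by isBoundedDefault)
  have hn : ((N + 1 : ℕ) : ℝ) ≠ 0 := by positivity
  have hlog : ((((N + 1 : ℕ) : ℝ) * Real.log b : ℝ) : EReal) ≤ ENNReal.log (u (N + 1)) := by
    rw [← ENNReal.log_natCast_pow hb]
    exact ENNReal.log_monotone (by exact_mod_cast hu (N + 1))
  have := EReal.div_le_div_right_of_nonneg (c := (((N + 1 : ℕ) : ℝ) : EReal)) (by positivity) hlog
  rwa [← EReal.coe_div, mul_div_cancel_left₀ _ hn] at this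

end GrowthRate

lemma card_le_coverCard {X ι : Type*} [Fintype ι] {d : X → X → ℝ} {f : X → X} {F : Set X}
    {ε : ℝ} {n : ℕ} (y : ι → X) (hyF : ∀ w, y w ∈ F)
    (hy : ∀ w w', w ≠ w' → ∃ i < n, ∀ x ∈ F,
      d (f^[i] x) (f^[i] (y w)) < ε → ¬ d (f^[i] x) (f^[i] (y w')) < ε) :
    (Fintype.card ι : ℕ∞) ≤ coverCard d f F ε n := by
  refine le_iInf₂ fun E hE => ?_
  choose x hxE hx using fun w => hE.2 (y w) (hyF w)
  have hinj : Function.Injective fun w => (⟨x w, hxE w⟩ : E) := by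
    intro w w' hww'
    by_contra hne
    obtain ⟨i, hi, hsep⟩ := hy w w' hne
    have hxw' : x w = x w' := congrArg Subtype.val hww'
    exact hsep (x w) (hE.1 (hxE w)) (hx w i hi) (hxw' ▸ hx w' i hi)
  exact_mod_cast (Fintype.card_le_of_injective _ hinj).trans_eq (Fintype.card_coe E)

section Rho

variable {M : Type*} [PseudoMetricSpace M] {γ₁ γ₂ γ₃ : ℝ → M} {D : ℝ}

lemma summable_two_zpow_neg_abs : Summable fun i : ℤ => (2 : ℝ) ^ (-|i|) := by
  apply Summable.of_nat_of_neg <;>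
  · refine (summable_geometric_of_lt_one (r := (2 : ℝ)⁻¹) (by norm_num) (by norm_num)).congr
      fun n => ?_
    simp [zpow_neg]

noncomputable def rhoTerm (γ₁ γ₂ : ℝ → M) (i : ℤ) : ℝ :=
  (2 : ℝ) ^ (-|i|) * ∫ t in (i : ℝ)..((i : ℝ) + 1), dist (γ₁ t) (γ₂ t)

lemma rhoTerm_nonneg (γ₁ γ₂ : ℝ → M) (i : ℤ) : 0 ≤ rhoTerm γ₁ γ₂ i :=
  mul_nonneg (by positivity)
    (intervalIntegral.integral_nonneg (by linarith) fun _ _ => dist_nonneg)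

lemma rhoTerm_le (hD : ∀ t, dist (γ₁ t) (γ₂ t) ≤ D) (i : ℤ) :
    rhoTerm γ₁ γ₂ i ≤ (2 : ℝ) ^ (-|i|) * D := by
  refine mul_le_mul_of_nonneg_left ?_ (by positivity)
  have := intervalIntegral.norm_integral_le_of_norm_le_const (a := (i : ℝ)) (b := i + 1)
    (f := fun t => dist (γ₁ t) (γ₂ t)) fun t _ => by
      rw [Real.norm_of_nonneg dist_nonneg]; exact hD t
  simpa using (le_abs_self _).trans (this.trans_eq (by simp))

lemma summable_rhoTerm (hD : ∀ t, dist (γ₁ t) (γ₂ t) ≤ D) : Summable (rhoTerm γ₁ γ₂) :=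
  (summable_two_zpow_neg_abs.mul_right D).of_nonneg_of_le (rhoTerm_nonneg γ₁ γ₂) (rhoTerm_le hD)

lemma rho_comm (γ₁ γ₂ : ℝ → M) : rho γ₁ γ₂ = rho γ₂ γ₁ := by
  simp only [rho, dist_comm]

lemma integral_dist_le_rho (hD : ∀ t, dist (γ₁ t) (γ₂ t) ≤ D) :
    ∫ t in (0 : ℝ)..1, dist (γ₁ t) (γ₂ t) ≤ rho γ₁ γ₂ := by
  have h : rhoTerm γ₁ γ₂ 0 ≤ rho γ₁ γ₂ :=
    (summable_rhoTerm hD).le_tsum 0 fun i _ => rhoTerm_nonneg γ₁ γ₂ i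
  simpa [rhoTerm] using h

lemma rho_le_tsum_compl (hD : ∀ t, dist (γ₁ t) (γ₂ t) ≤ D) (s : Finset ℤ)
    (hs : ∀ i ∈ s, EqOn γ₁ γ₂ (Icc (i : ℝ) (i + 1))) :
    rho γ₁ γ₂ ≤ ∑' i : {i : ℤ // i ∉ s}, (2 : ℝ) ^ (-|(i : ℤ)|) * D := by
  have hsupp : Function.support (rhoTerm γ₁ γ₂) ⊆ {i | i ∉ s} := by
    intro i hi his
    refine hi (mul_eq_zero_of_right _ ?_)
    rw [intervalIntegral.integral_congr (g := fun _ => (0 : ℝ)) fun t ht => by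
      rw [uIcc_of_le (by linarith)] at ht
      simp [hs i his ht]]
    simp
  change ∑' i, rhoTerm γ₁ γ₂ i ≤ _
  rw [← tsum_subtype_eq_of_support_subset hsupp]
  exact ((summable_rhoTerm hD).subtype _).tsum_le_tsum (fun i => rhoTerm_le hD i)
    ((summable_two_zpow_neg_abs.mul_right D).subtype _)

lemma exists_forall_rho_lt {ε : ℝ} (hε : 0 < ε) (D : ℝ) :
    ∃ m : ℕ, ∀ γ₁ γ₂ : ℝ → M, (∀ t, dist (γ₁ t) (γ₂ t) ≤ D) →
      (∀ i ∈ Finset.Icc (-m : ℤ) m, EqOn γ₁ γ₂ (Icc (i : ℝ) (i + 1))) → rho γ₁ γ₂ < ε := by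
  have hIcc : Tendsto (fun m : ℕ => Finset.Icc (-m : ℤ) m) atTop atTop := by
    refine tendsto_atTop_finset_of_monotone (fun a b hab => Finset.Icc_subset_Icc ?_ ?_)
      fun i => ⟨i.natAbs, by simp only [Finset.mem_Icc]; omega⟩ <;> simp [hab]
  obtain ⟨m, hm⟩ := (((tendsto_tsum_compl_atTop_zero fun i : ℤ => (2 : ℝ) ^ (-|i|) * D).comp
    hIcc).eventually_lt_const hε).exists
  exact ⟨m, fun γ₁ γ₂ hD hs => (rho_le_tsum_compl hD _ hs).trans_lt hm⟩

lemma rho_triangle (h₁ : ∀ i : ℤ, ContinuousOn γ₁ (Icc (i : ℝ) (i + 1)))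
    (h₂ : ∀ i : ℤ, ContinuousOn γ₂ (Icc (i : ℝ) (i + 1)))
    (h₃ : ∀ i : ℤ, ContinuousOn γ₃ (Icc (i : ℝ) (i + 1))) {D₁₂ D₂₃ : ℝ}
    (hD₁₂ : ∀ t, dist (γ₁ t) (γ₂ t) ≤ D₁₂) (hD₂₃ : ∀ t, dist (γ₂ t) (γ₃ t) ≤ D₂₃) :
    rho γ₁ γ₃ ≤ rho γ₁ γ₂ + rho γ₂ γ₃ := by
  have hint : ∀ {γ γ' : ℝ → M}, (∀ i : ℤ, ContinuousOn γ (Icc (i : ℝ) (i + 1))) →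
      (∀ i : ℤ, ContinuousOn γ' (Icc (i : ℝ) (i + 1))) → ∀ i : ℤ,
      IntervalIntegrable (fun t => dist (γ t) (γ' t)) volume (i : ℝ) (i + 1) :=
    fun h h' i => ContinuousOn.intervalIntegrable <| by
      rw [uIcc_of_le (by linarith)]; exact continuous_dist.comp_continuousOn ((h i).prodMk (h' i))
  have hD₁₃ : ∀ t, dist (γ₁ t) (γ₃ t) ≤ D₁₂ + D₂₃ := fun t =>
    (dist_triangle _ (γ₂ t) _).trans (add_le_add (hD₁₂ t) (hD₂₃ t))
  change ∑' i, rhoTerm γ₁ γ₃ i ≤ ∑' i, rhoTerm γ₁ γ₂ i + ∑' i, rhoTerm γ₂ γ₃ i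
  rw [← (summable_rhoTerm hD₁₂).tsum_add (summable_rhoTerm hD₂₃)]
  refine (summable_rhoTerm hD₁₃).tsum_le_tsum (fun i => ?_)
    ((summable_rhoTerm hD₁₂).add (summable_rhoTerm hD₂₃))
  rw [rhoTerm, rhoTerm, rhoTerm, ← mul_add,
    ← intervalIntegral.integral_add (hint h₁ h₂ i) (hint h₂ h₃ i)]
  exact mul_le_mul_of_nonneg_left (intervalIntegral.integral_mono_on (by linarith)
    (hint h₁ h₃ i) ((hint h₁ h₂ i).add (hint h₂ h₃ i)) fun t _ => dist_triangle _ _ _)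
    (by positivity)

end Rho

section Coding

variable {ι M : Type*} {I : ι → ℝ → M} {js js₁ js₂ : ℤ → ι} {γ γ₁ γ₂ : ℝ → M}

def IsCodedBy (I : ι → ℝ → M) (js : ℤ → ι) (γ : ℝ → M) : Prop :=
  ∀ i : ℤ, ∀ s ∈ Icc (0 : ℝ) 1, γ (i + s) = I (js i) s

def codedCurves (I : ι → ℝ → M) : Set (ℝ → M) :=
  {γ | ∃ js, IsCodedBy I js γ}

noncomputable def concatArcs (I : ι → ℝ → M) (js : ℤ → ι) : ℝ → M :=
  fun t => I (js ⌊t⌋) (Int.fract t)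

noncomputable def padCode (j₀ : ι) {s : Finset ℤ} (w : s → ι) : ℤ → ι :=
  Function.extend Subtype.val w fun _ => j₀

lemma padCode_apply (j₀ : ι) {s : Finset ℤ} (w : s → ι) {i : ℤ} (hi : i ∈ s) :
    padCode j₀ w i = w ⟨i, hi⟩ :=
  Subtype.val_injective.extend_apply w _ ⟨i, hi⟩

lemma timeOneShift_iterate_apply (γ : ℝ → M) (k : ℕ) (t : ℝ) :
    timeOneShift^[k] γ t = γ (t + k) := by
  induction k generalizing t with
  | zero => simp
  | succ k ih =>
    rw [Function.iterate_succ_apply', timeOneShift, ih, Nat.cast_succ, add_assoc, add_comm 1]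

lemma IsCodedBy.timeOneShift_iterate (h : IsCodedBy I js γ) (k : ℕ) :
    IsCodedBy I (fun i => js (i + k)) (timeOneShift^[k] γ) := by
  intro i s hs
  rw [timeOneShift_iterate_apply, ← h (i + k) s hs]
  push_cast
  ring_nf

lemma IsCodedBy.apply_eq (h : IsCodedBy I js γ) {i : ℤ} {t : ℝ}
    (ht : t ∈ Icc (i : ℝ) (i + 1)) : γ t = I (js i) (t - i) := by
  rw [← h i (t - i) ⟨by linarith [ht.1], by linarith [ht.2]⟩, add_sub_cancel]

lemma IsCodedBy.eqOn (h₁ : IsCodedBy I js₁ γ₁) (h₂ : IsCodedBy I js₂ γ₂) {i : ℤ}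
    (hi : js₁ i = js₂ i) : EqOn γ₁ γ₂ (Icc (i : ℝ) (i + 1)) := fun _ ht => by
  rw [h₁.apply_eq ht, h₂.apply_eq ht, hi]

lemma isCodedBy_concatArcs (hglue : ∀ j k, I j 1 = I k 0) (js : ℤ → ι) :
    IsCodedBy I js (concatArcs I js) := by
  intro i s ⟨hs₀, hs₁⟩
  rcases hs₁.lt_or_eq with hs₁ | rfl
  · have hfloor : ⌊(i : ℝ) + s⌋ = i := by
      rw [Int.floor_eq_iff]; constructor <;> linarith
    simp only [concatArcs, hfloor, Int.fract, add_sub_cancel_left]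
  · have hfloor : ⌊(i : ℝ) + 1⌋ = i + 1 := by
      rw [Int.floor_eq_iff]; push_cast; constructor <;> linarith
    simp only [concatArcs, hfloor, Int.fract]
    push_cast
    rw [sub_self, hglue]

lemma timeOneShift_mem_codedCurves (h : γ ∈ codedCurves I) : timeOneShift γ ∈ codedCurves I :=
  let ⟨_, hγ⟩ := h
  ⟨_, hγ.timeOneShift_iterate 1⟩

variable [PseudoMetricSpace M]

lemma IsCodedBy.continuousOn (h : IsCodedBy I js γ) (hI : ∀ j, ContinuousOn (I j) (Icc 0 1))
    (i : ℤ) : ContinuousOn γ (Icc (i : ℝ) (i + 1)) := by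
  refine ((hI (js i)).comp (by fun_prop) fun t ht => ?_).congr fun t ht => h.apply_eq ht
  exact ⟨by linarith [ht.1], by linarith [ht.2]⟩

lemma IsCodedBy.dist_le {D : ℝ} (hD : ∀ j k, ∀ s ∈ Icc (0 : ℝ) 1, dist (I j s) (I k s) ≤ D)
    (h₁ : IsCodedBy I js₁ γ₁) (h₂ : IsCodedBy I js₂ γ₂) (t : ℝ) : dist (γ₁ t) (γ₂ t) ≤ D := by
  have ht : t ∈ Icc (⌊t⌋ : ℝ) (⌊t⌋ + 1) := ⟨Int.floor_le t, (Int.lt_floor_add_one t).le⟩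
  rw [h₁.apply_eq ht, h₂.apply_eq ht]
  exact hD _ _ _ ⟨by linarith [ht.1], by linarith [ht.2]⟩

lemma exists_dist_arcs_le [Finite ι] (hI : ∀ j, ContinuousOn (I j) (Icc 0 1)) :
    ∃ D, ∀ j k, ∀ s ∈ Icc (0 : ℝ) 1, dist (I j s) (I k s) ≤ D := by
  have hbdd : Bornology.IsBounded (⋃ j, I j '' Icc 0 1) :=
    Bornology.isBounded_iUnion.mpr fun j => (isCompact_Icc.image_of_continuousOn (hI j)).isBounded
  obtain ⟨D, hD⟩ := Metric.isBounded_iff.mp hbdd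
  exact ⟨D, fun j k s hs =>
    hD (mem_iUnion_of_mem j ⟨s, hs, rfl⟩) (mem_iUnion_of_mem k ⟨s, hs, rfl⟩)⟩

lemma IsCodedBy.le_rho_add_rho {D μ : ℝ} (hI : ∀ j, ContinuousOn (I j) (Icc 0 1))
    (hD : ∀ j k, ∀ s ∈ Icc (0 : ℝ) 1, dist (I j s) (I k s) ≤ D)
    (hsep : ∀ j k, j ≠ k → μ ≤ ∫ t in (0 : ℝ)..1, dist (I j t) (I k t))
    (h : IsCodedBy I js γ) (h₁ : IsCodedBy I js₁ γ₁) (h₂ : IsCodedBy I js₂ γ₂)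
    (hne : js₁ 0 ≠ js₂ 0) : μ ≤ rho γ γ₁ + rho γ γ₂ := by
  have hint : ∫ t in (0 : ℝ)..1, dist (γ₁ t) (γ₂ t) =
      ∫ t in (0 : ℝ)..1, dist (I (js₁ 0) t) (I (js₂ 0) t) :=
    intervalIntegral.integral_congr fun t ht => by
      rw [uIcc_of_le zero_le_one] at ht
      have ht' : t ∈ Icc ((0 : ℤ) : ℝ) (((0 : ℤ) : ℝ) + 1) := by simpa using ht
      rw [h₁.apply_eq ht', h₂.apply_eq ht', Int.cast_zero, sub_zero]
  calc μ ≤ ∫ t in (0 : ℝ)..1, dist (γ₁ t) (γ₂ t) := hint ▸ hsep _ _ hne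
    _ ≤ rho γ₁ γ₂ := integral_dist_le_rho (h₁.dist_le hD h₂)
    _ ≤ rho γ₁ γ + rho γ γ₂ := rho_triangle (h₁.continuousOn hI) (h.continuousOn hI)
        (h₂.continuousOn hI) (h₁.dist_le hD h) (h.dist_le hD h₂)
    _ = rho γ γ₁ + rho γ γ₂ := by rw [rho_comm γ₁]

end Coding

section Entropy

variable {ι M : Type*} [PseudoMetricSpace M] [Fintype ι] [Nonempty ι] {I : ι → ℝ → M} {D : ℝ}
  (hglue : ∀ j k, I j 1 = I k 0)
  (hD : ∀ j k, ∀ s ∈ Icc (0 : ℝ) 1, dist (I j s) (I k s) ≤ D)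
include hglue hD

/-- Cylinder curves over the window `[-m, m + n]` are `(n, ε)`-dense once the `rho`-weight of
the complement of `[-m, m + 1]` is below `ε`. -/
lemma exists_coverCard_codedCurves_le_pow {ε : ℝ} (hε : 0 < ε) :
    ∃ k : ℕ, ∀ n, coverCard rho timeOneShift (codedCurves I) ε n ≤
      (Fintype.card ι : ℕ∞) ^ (n + k) := by
  classical
  obtain ⟨m, hm⟩ := exists_forall_rho_lt (M := M) hε D
  refine ⟨2 * m + 1, fun n => ?_⟩
  set s : Finset ℤ := Finset.Icc (-m) (m + n)
  let j₀ : ι := Classical.arbitrary ι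
  let E := Finset.univ.image fun w : s → ι => concatArcs I (padCode j₀ w)
  have hE : IsDynCover rho timeOneShift (codedCurves I) ε n E := by
    refine ⟨?_, ?_⟩
    · simp only [E, Finset.coe_image, Finset.coe_univ, image_univ]
      rintro _ ⟨w, rfl⟩
      exact ⟨_, isCodedBy_concatArcs hglue _⟩
    · rintro y ⟨js, hy⟩
      refine ⟨_, Finset.mem_image_of_mem _ (Finset.mem_univ fun i : s => js i), fun k _ => ?_⟩
      have hx := (isCodedBy_concatArcs hglue (padCode j₀ fun i : s => js i)).timeOneShift_iterate k
      refine hm _ _ (hx.dist_le hD (hy.timeOneShift_iterate k)) fun i hi =>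
        hx.eqOn (hy.timeOneShift_iterate k) ?_
      have his : i + k ∈ s := by simp only [s, Finset.mem_Icc] at hi ⊢; omega
      exact padCode_apply j₀ _ his
  have hcard : Fintype.card (s → ι) = Fintype.card ι ^ (n + (2 * m + 1)) := by
    rw [Fintype.card_fun, Fintype.card_coe, Int.card_Icc]
    congr 1
    omega
  calc coverCard rho timeOneShift (codedCurves I) ε n ≤ E.card := iInf₂_le E hE
    _ ≤ (Fintype.card (s → ι) : ℕ∞) := by exact_mod_cast Finset.card_image_le
    _ = _ := by rw [hcard]; push_cast; rfl

/-- Cylinder curves over the window `[0, n)` with distinct codes are `(n, μ / 2)`-separated. -/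
lemma pow_le_coverCard_codedCurves {μ : ℝ} (hI : ∀ j, ContinuousOn (I j) (Icc 0 1))
    (hsep : ∀ j k, j ≠ k → μ ≤ ∫ t in (0 : ℝ)..1, dist (I j t) (I k t)) (n : ℕ) :
    (Fintype.card ι : ℕ∞) ^ n ≤ coverCard rho timeOneShift (codedCurves I) (μ / 2) n := by
  classical
  let j₀ : ι := Classical.arbitrary ι
  let s : Finset ℤ := Finset.Ico 0 n
  have hcard : Fintype.card (s → ι) = Fintype.card ι ^ n := by
    rw [Fintype.card_fun, Fintype.card_coe, Int.card_Ico]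
    simp
  have hcoded := fun w : s → ι => isCodedBy_concatArcs hglue (padCode j₀ w)
  calc (Fintype.card ι : ℕ∞) ^ n = Fintype.card (s → ι) := by rw [hcard]; push_cast; rfl
    _ ≤ coverCard rho timeOneShift (codedCurves I) (μ / 2) n :=
      card_le_coverCard (fun w => concatArcs I (padCode j₀ w)) (fun w => ⟨_, hcoded w⟩)
        fun w w' hne => ?_
  obtain ⟨⟨i, hi⟩, hwi⟩ := Function.ne_iff.mp hne
  have hi' : 0 ≤ i ∧ i < n := by simpa [s] using hi
  refine ⟨i.toNat, by omega, ?_⟩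
  rintro x ⟨js, hx⟩ h₁ h₂
  have hcode : ∀ w : s → ι, padCode j₀ w (0 + i.toNat) = w ⟨i, hi⟩ := fun w => by
    rw [Int.toNat_of_nonneg hi'.1, zero_add, padCode_apply]
  have := (hx.timeOneShift_iterate i.toNat).le_rho_add_rho hI hD hsep
    ((hcoded w).timeOneShift_iterate i.toNat) ((hcoded w').timeOneShift_iterate i.toNat)
    (by simpa only [hcode] using hwi)
  linarith

end Entropy

theorem topEntropy_codedCurves {ι M : Type*} [PseudoMetricSpace M] [Fintype ι] [Nonempty ι]
    {I : ι → ℝ → M} (hI : ∀ j, ContinuousOn (I j) (Icc 0 1)) (hglue : ∀ j k, I j 1 = I k 0)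
    {μ : ℝ} (hμ : 0 < μ) (hsep : ∀ j k, j ≠ k → μ ≤ ∫ t in (0 : ℝ)..1, dist (I j t) (I k t)) :
    topEntropy rho timeOneShift (codedCurves I) = Real.log (Fintype.card ι) := by
  obtain ⟨D, hD⟩ := exists_dist_arcs_le hI
  have hcard : Fintype.card ι ≠ 0 := Fintype.card_ne_zero
  refine le_antisymm (iSup₂_le fun ε hε => ?_) (le_iSup₂_of_le (μ / 2) (by positivity) ?_)
  · obtain ⟨k, hk⟩ := exists_coverCard_codedCurves_le_pow hglue hD hε
    exact limsup_log_div_le_of_le_pow hcard k hk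
  · exact le_limsup_log_div_of_pow_le hcard (pow_le_coverCard_codedCurves hglue hD hI hsep)

lemma arcConcatenationsRestricted_eq_codedCurves {α β : ℕ} (I : Fin α → ℝ → Plane)
    (hβα : β ≤ α) :
    arcConcatenationsRestricted I β = codedCurves fun j : Fin β => I (Fin.castLE hβα j) := by
  ext γ
  constructor
  · rintro ⟨js, hjs, hγ⟩
    exact ⟨fun i => ⟨js i, hjs i⟩, hγ⟩
  · rintro ⟨js, hγ⟩
    exact ⟨fun i => Fin.castLE hβα (js i), fun i => (js i).2, hγ⟩

theorem entropy_arcConcatenations_restricted_general {α : ℕ} (I : Fin α → ℝ → Plane)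
    (hlip : ∀ j, ∃ L : NNReal, LipschitzOnWith L (I j) (Set.Icc 0 1))
    (h0 : ∀ j, I j 0 = 0) (h1 : ∀ j, I j 1 = 0)
    (μ : ℝ) (hμ : 0 < μ)
    (hsep : ∀ j k, j ≠ k → (∫ t in (0 : ℝ)..1, dist (I j t) (I k t)) = μ)
    (β : ℕ) (hβ : 2 ≤ β) (hβα : β < α) :
    (∀ γ ∈ arcConcatenationsRestricted I β,
      timeOneShift γ ∈ arcConcatenationsRestricted I β) ∧
    topEntropy rho timeOneShift (arcConcatenationsRestricted I β) = (Real.log β : EReal) := by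
  have hF := arcConcatenationsRestricted_eq_codedCurves I hβα.le
  have : Nonempty (Fin β) := ⟨⟨0, by omega⟩⟩
  have hcont : ∀ j, ContinuousOn (I j) (Icc 0 1) := fun j =>
    let ⟨_, hL⟩ := hlip j
    hL.continuousOn
  refine ⟨fun γ hγ => hF ▸ timeOneShift_mem_codedCurves (hF ▸ hγ), ?_⟩
  rw [hF, topEntropy_codedCurves (fun j => hcont _) (fun j k => (h1 _).trans (h0 _).symm) hμ
    fun j k hjk => (hsep _ _ ((Fin.castLE_injective hβα.le).ne hjk)).ge, Fintype.card_fin]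

/-- Restricting the concatenation space to `β` of the `α` arcs
(`2 ≤ β < α`) yields a set `Ω*_β` invariant under the time-one shift `F₁`, on which the
topological entropy of `F₁` equals `log β`. -/
theorem entropy_arcConcatenations_restricted {α : ℕ} (hα : 2 ≤ α) (I : Fin α → ℝ → Plane)
    (hlip : ∀ j, ∃ L : NNReal, LipschitzOnWith L (I j) (Set.Icc 0 1))
    (h0 : ∀ j, I j 0 = 0) (h1 : ∀ j, I j 1 = 0)
    (μ : ℝ) (hμ : 0 < μ)
    (hsep : ∀ j k, j ≠ k → (∫ t in (0 : ℝ)..1, dist (I j t) (I k t)) = μ)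
    (β : ℕ) (hβ : 2 ≤ β) (hβα : β < α) :
    (∀ γ ∈ arcConcatenationsRestricted I β,
      timeOneShift γ ∈ arcConcatenationsRestricted I β) ∧
    topEntropy rho timeOneShift (arcConcatenationsRestricted I β) = (Real.log β : EReal) :=
  entropy_arcConcatenations_restricted_general I hlip h0 h1 μ hμ hsep β hβ hβα
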